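/- arXiv:2307.02972 — 2 statements merged into one kernel-verified Lean document; each statement's English description precedes it below -/
import Mathlib

section
/- Let α₁ > 0, α₂ > 0, α₃ > 0 be real parameters and define the isotropic passive strain energy Ψ_p,isot(C) = α₁(I₁(C)·I₃(C)^{−1/3} − 3) + α₂(I₃(C)^{α₃} + I₃(C)^{−α₃} − 2). Then Ψ_p,isot(C) ≥ 0 for every real symmetric positive definite 3×3 matrix C, and Ψ_p,isot(C) = 0 if and only if C is the identity matrix; in particular the energy vanishes exactly in the undeformed reference configuration. -/
open Matrix

/-!
The energy splits into an isochoric part `tr C · det C ^ (-1/3) - 3` and a volumetric part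
`t + t⁻¹ - 2` with `t = det C ^ α₃`. In eigenvalues, the isochoric part is nonnegative by AM-GM,
with equality only when all eigenvalues coincide, i.e. when `C` is a multiple of the identity;
the volumetric part is `(t - 1)² / t ≥ 0`, vanishing only when `det C = 1`. Both vanish exactly
at `C = 1`.
-/

namespace Real

variable {x : ℝ}

lemma add_inv_sub_two_eq {t : ℝ} (ht : t ≠ 0) : t + t⁻¹ - 2 = (t - 1) ^ 2 / t := by
  field_simp
  ring

lemma two_le_rpow_add_rpow_neg (hx : 0 < x) (a : ℝ) : 2 ≤ x ^ a + x ^ (-a) := by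
  have ht : 0 < x ^ a := rpow_pos_of_pos hx a
  rw [rpow_neg hx.le, ← sub_nonneg, add_inv_sub_two_eq ht.ne']
  positivity

lemma rpow_add_rpow_neg_eq_two_iff (hx : 0 < x) {a : ℝ} (ha : a ≠ 0) :
    x ^ a + x ^ (-a) = 2 ↔ x = 1 := by
  have ht : 0 < x ^ a := rpow_pos_of_pos hx a
  rw [rpow_neg hx.le, ← sub_eq_zero, add_inv_sub_two_eq ht.ne', div_eq_zero_iff,
    or_iff_left ht.ne', sq_eq_zero_iff, sub_eq_zero, ← rpow_left_inj hx.le zero_le_one ha,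
    one_rpow]

end Real

namespace Matrix

variable {n : Type*} [Fintype n]

lemma sum_one_div_card [Nonempty n] : ∑ _ : n, 1 / (Fintype.card n : ℝ) = 1 := by
  simp

variable [DecidableEq n] {A : Matrix n n ℝ}

lemma IsHermitian.eq_smul_one_of_eigenvalues_eq (hA : A.IsHermitian) {c : ℝ}
    (h : ∀ i, hA.eigenvalues i = c) : A = c • 1 := by
  rw [hA.spectral_theorem, show hA.eigenvalues = fun _ ↦ c from funext h]
  simp [Unitary.conjStarAlgAut_apply, ← smul_one_eq_diagonal]

lemma IsHermitian.trace_div_card_eq (hA : A.IsHermitian) :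
    A.trace / Fintype.card n = ∑ i, 1 / (Fintype.card n : ℝ) * hA.eigenvalues i := by
  rw [← Finset.mul_sum, hA.trace_eq_sum_eigenvalues]
  simp [div_eq_inv_mul]

lemma PosSemidef.det_rpow_eq_prod (hA : A.PosSemidef) (r : ℝ) :
    A.det ^ r = ∏ i, hA.isHermitian.eigenvalues i ^ r := by
  rw [hA.isHermitian.det_eq_prod_eigenvalues]
  exact (Real.finsetProd_rpow _ _ (fun i _ ↦ hA.eigenvalues_nonneg i) r).symm

variable [Nonempty n]

lemma PosSemidef.det_rpow_le_trace_div_card (hA : A.PosSemidef) :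
    A.det ^ (1 / (Fintype.card n : ℝ)) ≤ A.trace / Fintype.card n := by
  rw [hA.det_rpow_eq_prod, hA.isHermitian.trace_div_card_eq]
  exact Real.geom_mean_le_arith_mean_weighted _ _ _ (fun _ _ ↦ by positivity) sum_one_div_card
    (fun i _ ↦ hA.eigenvalues_nonneg i)

lemma PosSemidef.eq_smul_one_of_trace_div_card_le_det_rpow (hA : A.PosSemidef)
    (h : A.trace / Fintype.card n ≤ A.det ^ (1 / (Fintype.card n : ℝ))) :
    A = (A.trace / Fintype.card n) • 1 := by
  have h_eq := h.antisymm' hA.det_rpow_le_trace_div_card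
  rw [hA.det_rpow_eq_prod] at h_eq
  rw [hA.isHermitian.trace_div_card_eq] at h_eq ⊢
  refine hA.isHermitian.eq_smul_one_of_eigenvalues_eq fun i ↦ ?_
  exact (Real.geom_mean_eq_arith_mean_weighted_iff_of_pos' _ _ _ (fun _ _ ↦ by positivity)
    sum_one_div_card (fun i _ ↦ hA.eigenvalues_nonneg i)).1 h_eq i (Finset.mem_univ i)

lemma PosDef.card_le_trace_mul_det_rpow (hA : A.PosDef) :
    (Fintype.card n : ℝ) ≤ A.trace * A.det ^ (-1 / (Fintype.card n : ℝ)) := by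
  have hg : 0 < A.det ^ (1 / (Fintype.card n : ℝ)) := Real.rpow_pos_of_pos hA.det_pos _
  rw [neg_div, Real.rpow_neg hA.det_pos.le, ← div_eq_mul_inv, le_div_iff₀ hg, ← le_div_iff₀']
  · exact hA.posSemidef.det_rpow_le_trace_div_card
  · exact_mod_cast Fintype.card_pos

end Matrix

/-- The isotropic passive strain energy
`Ψ(C) = α₁ (I₁ I₃^(-1/3) − 3) + α₂ (I₃^α₃ + I₃^(−α₃) − 2)` is nonnegative on symmetric
positive definite matrices and vanishes exactly at the identity. -/
theorem isotropic_passive_energy_nonneg_eq_zero_iff_id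
    (α₁ α₂ α₃ : ℝ) (h₁ : 0 < α₁) (h₂ : 0 < α₂) (h₃ : 0 < α₃)
    (C : Matrix (Fin 3) (Fin 3) ℝ) (hC : C.PosDef) :
    0 ≤ α₁ * (C.trace * C.det ^ (-(1 : ℝ) / 3) - 3) +
        α₂ * (C.det ^ α₃ + C.det ^ (-α₃) - 2) ∧
      (α₁ * (C.trace * C.det ^ (-(1 : ℝ) / 3) - 3) +
          α₂ * (C.det ^ α₃ + C.det ^ (-α₃) - 2) = 0 ↔
        C = (1 : Matrix (Fin 3) (Fin 3) ℝ)) := by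
  have h_iso : 0 ≤ C.trace * C.det ^ (-(1 : ℝ) / 3) - 3 := by
    simpa using hC.card_le_trace_mul_det_rpow
  have h_vol : 0 ≤ C.det ^ α₃ + C.det ^ (-α₃) - 2 :=
    sub_nonneg.2 (Real.two_le_rpow_add_rpow_neg hC.det_pos α₃)
  have h_iso' := mul_nonneg h₁.le h_iso
  have h_vol' := mul_nonneg h₂.le h_vol
  refine ⟨add_nonneg h_iso' h_vol', fun h_zero ↦ ?_, ?_⟩
  · obtain ⟨h_iso_zero, h_vol_zero⟩ := (add_eq_zero_iff_of_nonneg h_iso' h_vol').1 h_zero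
    have h_det : C.det = 1 := (Real.rpow_add_rpow_neg_eq_two_iff hC.det_pos h₃.ne').1 <| by
      linarith [(mul_eq_zero.1 h_vol_zero).resolve_left h₂.ne']
    have h_trace : C.trace = 3 := by
      have := (mul_eq_zero.1 h_iso_zero).resolve_left h₁.ne'
      rw [h_det, Real.one_rpow, mul_one] at this
      linarith
    have h_scalar :=
      hC.posSemidef.eq_smul_one_of_trace_div_card_le_det_rpow (by simp [h_det, h_trace])
    simpa [h_trace] using h_scalar
  · rintro rfl
    norm_num
end

section
/- Let k₁, …, k₇ : [0, T] → ℝ be continuous and nonnegative, and let n = (n_A, n_B, n_C, n_D) : [0, T] → ℝ⁴ be differentiable and satisfy the Hai–Murphy cross-bridge system. If n(0) has nonnegative components with n_A(0) + n_B(0) + n_C(0) + n_D(0) = 1, then for every t ∈ [0, T] all components of n(t) lie in [0, 1] and n_A(t) + n_B(t) + n_C(t) + n_D(t) = 1; i.e., the probability simplex is forward invariant under the cross-bridge dynamics. -/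
/-!
Write the system as `ṅ = K(t) *ᵥ n` with `K` the Hai–Murphy rate matrix. Its columns sum to
zero, so `∑ nᵢ` is conserved. Its off-diagonal entries are nonnegative (it is a Metzler matrix),
so in `-(nᵢ⁻ (K n)ᵢ) = -Kᵢⱼ nᵢ⁻ nⱼ⁺ + Kᵢⱼ nᵢ⁻ nⱼ⁻` (summed over `j`) the first terms are `≤ 0`
(for `i = j` because `nᵢ⁻ nᵢ⁺ = 0`). Hence the mass `g = ∑ (nᵢ⁻)²` of the negative parts satisfies
`g' ≤ C g`, with `C` given by an upper bound of the entries of `K` on the compact interval.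
As `g(0) = 0`, Grönwall's inequality forces `g ≡ 0`: the solution stays nonnegative, and with the
conserved sum every component lies in `[0, 1]`.
-/

open Set Filter Topology Matrix

lemma negPart_sq_le_sq (x : ℝ) : x⁻ ^ 2 ≤ x ^ 2 := by
  rcases le_total x 0 with h | h <;> simp [h]

lemma negPart_mul_posPart_eq_zero (x : ℝ) : x⁻ * x⁺ = 0 := by
  rcases le_total x 0 with h | h <;> simp [h]

lemma hasDerivAt_negPart_sq (x : ℝ) : HasDerivAt (fun y : ℝ => y⁻ ^ 2) (-(2 * x⁻)) x := by
  rcases lt_trichotomy x 0 with hx | rfl | hx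
  · have h : (fun y : ℝ => y⁻ ^ 2) =ᶠ[𝓝 x] fun y => y ^ 2 := by
      filter_upwards [Iio_mem_nhds hx] with y hy
      rw [negPart_of_nonpos hy.le, neg_sq]
    simpa [negPart_of_nonpos hx.le] using (hasDerivAt_pow 2 x).congr_of_eventuallyEq h
  · rw [hasDerivAt_iff_isLittleO_nhds_zero]
    refine Asymptotics.IsBigO.trans_isLittleO (.of_bound 1 (.of_forall fun y => ?_))
      (Asymptotics.isLittleO_pow_id one_lt_two)
    simpa using negPart_sq_le_sq y
  · have h : (fun y : ℝ => y⁻ ^ 2) =ᶠ[𝓝 x] fun _ => 0 := by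
      filter_upwards [Ioi_mem_nhds hx] with y hy
      simp [negPart_of_nonneg hy.out.le]
    simpa [negPart_of_nonneg hx.le] using (hasDerivAt_const x (0 : ℝ)).congr_of_eventuallyEq h

lemma neg_negPart_mul_mul_le {x y a M : ℝ} (h : 0 ≤ a * (x⁻ * y⁺)) (ha : a ≤ M) :
    -(x⁻ * (a * y)) ≤ M * (x⁻ * y⁻) := by
  have hpos : 0 ≤ x⁻ * y⁻ := mul_nonneg (negPart_nonneg x) (negPart_nonneg y)
  calc -(x⁻ * (a * y)) = -(a * (x⁻ * y⁺)) + a * (x⁻ * y⁻) := by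
        nth_rw 1 [← posPart_sub_negPart y]; ring
    _ ≤ M * (x⁻ * y⁻) := by linarith [mul_le_mul_of_nonneg_right ha hpos]

lemma exists_forall_apply_le_of_continuousOn {X ι κ : Type*} [TopologicalSpace X]
    [Finite ι] [Finite κ] {K : X → Matrix ι κ ℝ} {s : Set X} (hs : IsCompact s)
    (hK : ∀ i j, ContinuousOn (fun t => K t i j) s) : ∃ M, ∀ t ∈ s, ∀ i j, K t i j ≤ M := by
  choose M hM using fun ij : ι × κ => hs.bddAbove_image (hK ij.1 ij.2)
  obtain ⟨M', hM'⟩ := Finite.exists_le M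
  exact ⟨M', fun t ht i j => (hM (i, j) (mem_image_of_mem _ ht)).trans (hM' (i, j))⟩

namespace Matrix

variable {ι : Type*} [Fintype ι]

def IsMetzler (A : Matrix ι ι ℝ) : Prop := ∀ i j, i ≠ j → 0 ≤ A i j

lemma IsMetzler.sum_neg_two_mul_negPart_mul_mulVec_le {A : Matrix ι ι ℝ} (hA : A.IsMetzler)
    {M : ℝ} (hAM : ∀ i j, A i j ≤ M) (hM : 0 ≤ M) (v : ι → ℝ) :
    ∑ i, -(2 * (v i)⁻) * (A *ᵥ v) i ≤ 2 * M * Fintype.card ι * ∑ i, (v i)⁻ ^ 2 := by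
  have hterm : ∀ i j, -((v i)⁻ * (A i j * v j)) ≤ M * ((v i)⁻ * (v j)⁻) := by
    intro i j
    refine neg_negPart_mul_mul_le ?_ (hAM i j)
    rcases eq_or_ne i j with rfl | hij
    · simp [negPart_mul_posPart_eq_zero]
    · exact mul_nonneg (hA i j hij) (mul_nonneg (negPart_nonneg _) (posPart_nonneg _))
  calc ∑ i, -(2 * (v i)⁻) * (A *ᵥ v) i = ∑ i, ∑ j, 2 * -((v i)⁻ * (A i j * v j)) := by
        simp only [mulVec, dotProduct, Finset.mul_sum]
        exact Finset.sum_congr rfl fun i _ => Finset.sum_congr rfl fun j _ => by ring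
    _ ≤ ∑ i, ∑ j, 2 * (M * ((v i)⁻ * (v j)⁻)) := by gcongr with i _ j; exact hterm i j
    _ = 2 * M * (∑ i, (v i)⁻) ^ 2 := by
        rw [sq, Finset.sum_mul_sum]
        simp only [Finset.mul_sum, mul_assoc]
    _ ≤ 2 * M * Fintype.card ι * ∑ i, (v i)⁻ ^ 2 := by
        rw [mul_assoc _ (Fintype.card ι : ℝ)]
        gcongr
        exact sq_sum_le_card_mul_sum_sq

end Matrix

section LinearSystem

variable {ι : Type*} [Fintype ι] {a b : ℝ} {K : ℝ → Matrix ι ι ℝ} {n : ℝ → ι → ℝ}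

theorem sum_apply_eq_of_hasDerivWithinAt_mulVec
    (hn : ∀ t ∈ Icc a b, HasDerivWithinAt n (K t *ᵥ n t) (Icc a b) t)
    (hK : ∀ t ∈ Icc a b, ∀ j, ∑ i, K t i j = 0) :
    ∀ t ∈ Icc a b, ∑ i, n t i = ∑ i, n a i := by
  have hsum : ∀ t ∈ Icc a b, HasDerivWithinAt (fun s => ∑ i, n s i) 0 (Icc a b) t := by
    intro t ht
    have hcol : ∑ i, (K t *ᵥ n t) i = 0 := by
      simp only [mulVec, dotProduct]
      rw [Finset.sum_comm]
      simp [← Finset.sum_mul, hK t ht]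
    exact hcol ▸ HasDerivWithinAt.fun_sum fun i _ => hasDerivWithinAt_pi.1 (hn t ht) i
  exact constant_of_has_deriv_right_zero (fun t ht => (hsum t ht).continuousWithinAt)
    fun t ht => (hsum t (Ico_subset_Icc_self ht)).mono_of_mem_nhdsWithin (Icc_mem_nhdsGE_of_mem ht)

theorem nonneg_of_hasDerivWithinAt_mulVec
    (hn : ∀ t ∈ Icc a b, HasDerivWithinAt n (K t *ᵥ n t) (Icc a b) t)
    (hKc : ∀ i j, ContinuousOn (fun t => K t i j) (Icc a b))
    (hK : ∀ t ∈ Icc a b, (K t).IsMetzler) (h₀ : 0 ≤ n a) :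
    ∀ t ∈ Icc a b, 0 ≤ n t := by
  obtain ⟨M, hM⟩ := exists_forall_apply_le_of_continuousOn isCompact_Icc hKc
  set g : ℝ → ℝ := fun t => ∑ i, (n t i)⁻ ^ 2
  have hg : ∀ t ∈ Icc a b,
      HasDerivWithinAt g (∑ i, -(2 * (n t i)⁻) * (K t *ᵥ n t) i) (Icc a b) t :=
    fun t ht => HasDerivWithinAt.fun_sum fun i _ =>
      (hasDerivAt_negPart_sq _).comp_hasDerivWithinAt t (hasDerivWithinAt_pi.1 (hn t ht) i)
  have hgron := le_gronwallBound_of_liminf_deriv_right_le (δ := 0) (ε := 0)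
    (K := 2 * max M 0 * Fintype.card ι) (fun t ht => (hg t ht).continuousWithinAt)
    (fun t ht r hr => ((hg t (Ico_subset_Icc_self ht)).mono_of_mem_nhdsWithin
      (Icc_mem_nhdsGE_of_mem ht)).liminf_right_slope_le hr)
    (by simp [g, negPart_of_nonneg (h₀ _)])
    fun t ht => by
      rw [add_zero]
      exact (hK t (Ico_subset_Icc_self ht)).sum_neg_two_mul_negPart_mul_mulVec_le
        (fun i j => (hM t (Ico_subset_Icc_self ht) i j).trans (le_max_left _ _))
        (le_max_right _ _) (n t)
  intro t ht i
  have hg0 : g t ≤ 0 := by simpa [gronwallBound_ε0_δ0] using hgron t ht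
  have hi : (n t i)⁻ ^ 2 = 0 :=
    (Finset.sum_eq_zero_iff_of_nonneg fun j _ => sq_nonneg _).1
      (hg0.antisymm (by positivity)) i (Finset.mem_univ i)
  exact negPart_eq_zero.1 (pow_eq_zero_iff two_ne_zero |>.1 hi)

end LinearSystem

def haiMurphyMatrix (k₁ k₂ k₃ k₄ k₅ k₆ k₇ : ℝ) : Matrix (Fin 4) (Fin 4) ℝ :=
  !![-k₁, k₂, 0, k₇;
     k₁, -(k₂ + k₃), k₄, 0;
     0, k₃, -(k₄ + k₅), k₆;
     0, 0, k₅, -(k₆ + k₇)]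

section HaiMurphy

variable {k₁ k₂ k₃ k₄ k₅ k₆ k₇ : ℝ}

lemma haiMurphyMatrix_mulVec (nA nB nC nD : ℝ) :
    haiMurphyMatrix k₁ k₂ k₃ k₄ k₅ k₆ k₇ *ᵥ ![nA, nB, nC, nD] =
      ![-k₁ * nA + k₂ * nB + k₇ * nD, k₁ * nA - (k₂ + k₃) * nB + k₄ * nC,
        k₃ * nB - (k₄ + k₅) * nC + k₆ * nD, k₅ * nC - (k₆ + k₇) * nD] := by
  ext i
  fin_cases i <;> simp [haiMurphyMatrix, mulVec, dotProduct, Fin.sum_univ_four] <;> ring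

lemma sum_haiMurphyMatrix_apply (j : Fin 4) :
    ∑ i, haiMurphyMatrix k₁ k₂ k₃ k₄ k₅ k₆ k₇ i j = 0 := by
  fin_cases j <;> simp [haiMurphyMatrix, Fin.sum_univ_four, ← sub_eq_add_neg]

lemma isMetzler_haiMurphyMatrix (h₁ : 0 ≤ k₁) (h₂ : 0 ≤ k₂) (h₃ : 0 ≤ k₃) (h₄ : 0 ≤ k₄)
    (h₅ : 0 ≤ k₅) (h₆ : 0 ≤ k₆) (h₇ : 0 ≤ k₇) :
    (haiMurphyMatrix k₁ k₂ k₃ k₄ k₅ k₆ k₇).IsMetzler := by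
  intro i j hij
  fin_cases i <;> fin_cases j <;> simp_all [haiMurphyMatrix]

end HaiMurphy

lemma continuousOn_haiMurphyMatrix_apply {s : Set ℝ} {k₁ k₂ k₃ k₄ k₅ k₆ k₇ : ℝ → ℝ}
    (h₁ : ContinuousOn k₁ s) (h₂ : ContinuousOn k₂ s) (h₃ : ContinuousOn k₃ s)
    (h₄ : ContinuousOn k₄ s) (h₅ : ContinuousOn k₅ s) (h₆ : ContinuousOn k₆ s)
    (h₇ : ContinuousOn k₇ s) (i j : Fin 4) :
    ContinuousOn
      (fun t => haiMurphyMatrix (k₁ t) (k₂ t) (k₃ t) (k₄ t) (k₅ t) (k₆ t) (k₇ t) i j) s := by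
  fin_cases i <;> fin_cases j <;> simp [haiMurphyMatrix] <;> fun_prop

theorem haiMurphy_simplex_forward_invariant_general
    (T : ℝ) (k₁ k₂ k₃ k₄ k₅ k₆ k₇ : ℝ → ℝ)
    (hk₁c : ContinuousOn k₁ (Set.Icc 0 T)) (hk₂c : ContinuousOn k₂ (Set.Icc 0 T))
    (hk₃c : ContinuousOn k₃ (Set.Icc 0 T)) (hk₄c : ContinuousOn k₄ (Set.Icc 0 T))
    (hk₅c : ContinuousOn k₅ (Set.Icc 0 T)) (hk₆c : ContinuousOn k₆ (Set.Icc 0 T))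
    (hk₇c : ContinuousOn k₇ (Set.Icc 0 T))
    (hk₁ : ∀ t ∈ Set.Icc 0 T, 0 ≤ k₁ t) (hk₂ : ∀ t ∈ Set.Icc 0 T, 0 ≤ k₂ t)
    (hk₃ : ∀ t ∈ Set.Icc 0 T, 0 ≤ k₃ t) (hk₄ : ∀ t ∈ Set.Icc 0 T, 0 ≤ k₄ t)
    (hk₅ : ∀ t ∈ Set.Icc 0 T, 0 ≤ k₅ t) (hk₆ : ∀ t ∈ Set.Icc 0 T, 0 ≤ k₆ t)
    (hk₇ : ∀ t ∈ Set.Icc 0 T, 0 ≤ k₇ t)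
    (nA nB nC nD : ℝ → ℝ)
    (hA : ∀ t ∈ Set.Icc 0 T,
      HasDerivWithinAt nA (-(k₁ t) * nA t + k₂ t * nB t + k₇ t * nD t) (Set.Icc 0 T) t)
    (hB : ∀ t ∈ Set.Icc 0 T,
      HasDerivWithinAt nB (k₁ t * nA t - (k₂ t + k₃ t) * nB t + k₄ t * nC t)
        (Set.Icc 0 T) t)
    (hCd : ∀ t ∈ Set.Icc 0 T,
      HasDerivWithinAt nC (k₃ t * nB t - (k₄ t + k₅ t) * nC t + k₆ t * nD t)
        (Set.Icc 0 T) t)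
    (hD : ∀ t ∈ Set.Icc 0 T,
      HasDerivWithinAt nD (k₅ t * nC t - (k₆ t + k₇ t) * nD t) (Set.Icc 0 T) t)
    (hA0 : 0 ≤ nA 0) (hB0 : 0 ≤ nB 0) (hC0 : 0 ≤ nC 0) (hD0 : 0 ≤ nD 0)
    (hsum0 : nA 0 + nB 0 + nC 0 + nD 0 = 1) :
    ∀ t ∈ Set.Icc 0 T,
      nA t ∈ Set.Icc (0 : ℝ) 1 ∧ nB t ∈ Set.Icc (0 : ℝ) 1 ∧
      nC t ∈ Set.Icc (0 : ℝ) 1 ∧ nD t ∈ Set.Icc (0 : ℝ) 1 ∧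
      nA t + nB t + nC t + nD t = 1 := by
  set K : ℝ → Matrix (Fin 4) (Fin 4) ℝ :=
    fun t => haiMurphyMatrix (k₁ t) (k₂ t) (k₃ t) (k₄ t) (k₅ t) (k₆ t) (k₇ t)
  set n : ℝ → Fin 4 → ℝ := fun t => ![nA t, nB t, nC t, nD t]
  have hn : ∀ t ∈ Icc 0 T, HasDerivWithinAt n (K t *ᵥ n t) (Icc 0 T) t := by
    intro t ht
    rw [haiMurphyMatrix_mulVec, hasDerivWithinAt_pi]
    intro i
    fin_cases i
    exacts [hA t ht, hB t ht, hCd t ht, hD t ht]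
  have hnonneg := nonneg_of_hasDerivWithinAt_mulVec hn
    (continuousOn_haiMurphyMatrix_apply hk₁c hk₂c hk₃c hk₄c hk₅c hk₆c hk₇c)
    (fun t ht => isMetzler_haiMurphyMatrix (hk₁ t ht) (hk₂ t ht) (hk₃ t ht) (hk₄ t ht)
      (hk₅ t ht) (hk₆ t ht) (hk₇ t ht))
    (by simp [n, Pi.le_def, Fin.forall_fin_succ, hA0, hB0, hC0, hD0])
  have hsum := sum_apply_eq_of_hasDerivWithinAt_mulVec hn
    fun t _ => sum_haiMurphyMatrix_apply
  intro t ht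
  obtain ⟨hAt, hBt, hCt, hDt⟩ : 0 ≤ nA t ∧ 0 ≤ nB t ∧ 0 ≤ nC t ∧ 0 ≤ nD t := by
    simpa [n, Pi.le_def, Fin.forall_fin_succ] using hnonneg t ht
  have hsumt : nA t + nB t + nC t + nD t = 1 := by
    simpa [n, Fin.sum_univ_four, hsum0] using hsum t ht
  refine ⟨⟨hAt, ?_⟩, ⟨hBt, ?_⟩, ⟨hCt, ?_⟩, ⟨hDt, ?_⟩, hsumt⟩ <;> linarith

/-- Forward invariance of the probability simplex under the Hai–Murphy cross-bridge
dynamics: if the rate coefficients are continuous and nonnegative on `[0, T]` and the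
initial state lies in the simplex, then for all `t ∈ [0, T]` all components of the
solution lie in `[0, 1]` and sum to `1`. -/
theorem haiMurphy_simplex_forward_invariant
    (T : ℝ) (hT : 0 ≤ T) (k₁ k₂ k₃ k₄ k₅ k₆ k₇ : ℝ → ℝ)
    (hk₁c : ContinuousOn k₁ (Set.Icc 0 T)) (hk₂c : ContinuousOn k₂ (Set.Icc 0 T))
    (hk₃c : ContinuousOn k₃ (Set.Icc 0 T)) (hk₄c : ContinuousOn k₄ (Set.Icc 0 T))
    (hk₅c : ContinuousOn k₅ (Set.Icc 0 T)) (hk₆c : ContinuousOn k₆ (Set.Icc 0 T))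
    (hk₇c : ContinuousOn k₇ (Set.Icc 0 T))
    (hk₁ : ∀ t ∈ Set.Icc 0 T, 0 ≤ k₁ t) (hk₂ : ∀ t ∈ Set.Icc 0 T, 0 ≤ k₂ t)
    (hk₃ : ∀ t ∈ Set.Icc 0 T, 0 ≤ k₃ t) (hk₄ : ∀ t ∈ Set.Icc 0 T, 0 ≤ k₄ t)
    (hk₅ : ∀ t ∈ Set.Icc 0 T, 0 ≤ k₅ t) (hk₆ : ∀ t ∈ Set.Icc 0 T, 0 ≤ k₆ t)
    (hk₇ : ∀ t ∈ Set.Icc 0 T, 0 ≤ k₇ t)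
    (nA nB nC nD : ℝ → ℝ)
    (hA : ∀ t ∈ Set.Icc 0 T,
      HasDerivWithinAt nA (-(k₁ t) * nA t + k₂ t * nB t + k₇ t * nD t) (Set.Icc 0 T) t)
    (hB : ∀ t ∈ Set.Icc 0 T,
      HasDerivWithinAt nB (k₁ t * nA t - (k₂ t + k₃ t) * nB t + k₄ t * nC t)
        (Set.Icc 0 T) t)
    (hCd : ∀ t ∈ Set.Icc 0 T,
      HasDerivWithinAt nC (k₃ t * nB t - (k₄ t + k₅ t) * nC t + k₆ t * nD t)
        (Set.Icc 0 T) t)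
    (hD : ∀ t ∈ Set.Icc 0 T,
      HasDerivWithinAt nD (k₅ t * nC t - (k₆ t + k₇ t) * nD t) (Set.Icc 0 T) t)
    (hA0 : 0 ≤ nA 0) (hB0 : 0 ≤ nB 0) (hC0 : 0 ≤ nC 0) (hD0 : 0 ≤ nD 0)
    (hsum0 : nA 0 + nB 0 + nC 0 + nD 0 = 1) :
    ∀ t ∈ Set.Icc 0 T,
      nA t ∈ Set.Icc (0 : ℝ) 1 ∧ nB t ∈ Set.Icc (0 : ℝ) 1 ∧
      nC t ∈ Set.Icc (0 : ℝ) 1 ∧ nD t ∈ Set.Icc (0 : ℝ) 1 ∧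
      nA t + nB t + nC t + nD t = 1 :=
  haiMurphy_simplex_forward_invariant_general T k₁ k₂ k₃ k₄ k₅ k₆ k₇ hk₁c hk₂c hk₃c hk₄c hk₅c hk₆c
    hk₇c hk₁ hk₂ hk₃ hk₄ hk₅ hk₆ hk₇ nA nB nC nD hA hB hCd hD hA0 hB0 hC0 hD0 hsum0
end
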